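/- arXiv:2511.03955 — 9 statements merged into one kernel-verified Lean document; each statement's English description precedes it below -/
import Mathlib

section
/- The function f(τ) = τ/(1-√τ) is convex on the open interval (0,1). -/
/-! With `s = √τ`, the derivative `τ ↦ (1 - s / 2) / (1 - s) ^ 2` of `τ / (1 - √τ)` splits as
`1 / (2 (1 - s)) + 1 / (2 (1 - s) ^ 2)`, which is increasing in `s < 1` and hence in `τ < 1`;
a function with a monotone derivative is convex. -/

open Real Set

theorem hasDerivAt_div_one_sub_sqrt {x : ℝ} (hx : 0 < x) (hx1 : x ≠ 1) :
    HasDerivAt (fun τ => τ / (1 - √τ)) (1 / (2 * (1 - √x)) + 1 / (2 * (1 - √x) ^ 2)) x := by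
  have hs : √x ≠ 0 := (sqrt_pos.mpr hx).ne'
  have hden : 1 - √x ≠ 0 := sub_ne_zero.mpr (Ne.symm (sqrt_eq_one.not.mpr hx1))
  have h : HasDerivAt (fun τ => τ / (1 - √τ)) _ x :=
    (hasDerivAt_id' x).div ((hasDerivAt_sqrt hx.ne').const_sub 1) hden
  convert h using 1
  field_simp
  linear_combination sq_sqrt hx.le

theorem monotoneOn_derivative_div_one_sub_sqrt :
    MonotoneOn (fun τ => 1 / (2 * (1 - √τ)) + 1 / (2 * (1 - √τ) ^ 2)) (Iio 1) := by
  intro x _ y hy hxy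
  have hy1 : 0 < 1 - √y := sub_pos.mpr ((sqrt_lt' one_pos).mpr (by simpa using hy))
  have hyx : 1 - √y ≤ 1 - √x := sub_le_sub_left (sqrt_le_sqrt hxy) 1
  dsimp only
  gcongr

/-- The function `f(τ) = τ / (1 - √τ)` is convex on the open interval `(0, 1)`. -/
theorem convexOn_mm1_queue_length :
    ConvexOn ℝ (Set.Ioo (0:ℝ) 1) (fun τ => τ / (1 - Real.sqrt τ)) := by
  have hderiv : ∀ x ∈ Ioo (0 : ℝ) 1, HasDerivAt (fun τ => τ / (1 - √τ))
      (1 / (2 * (1 - √x)) + 1 / (2 * (1 - √x) ^ 2)) x :=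
    fun x hx => hasDerivAt_div_one_sub_sqrt hx.1 hx.2.ne
  refine MonotoneOn.convexOn_of_deriv (convex_Ioo 0 1)
    (fun x hx => (hderiv x hx).continuousAt.continuousWithinAt) ?_ ?_ <;> rw [interior_Ioo]
  · exact fun x hx => (hderiv x hx).differentiableAt.differentiableWithinAt
  · exact (monotoneOn_derivative_div_one_sub_sqrt.mono Ioo_subset_Iio_self).congr
      fun x hx => ((hderiv x hx).deriv).symm
end

section
/- For every integer k ≥ 1, the function f(τ) = τ^{√(2(k+1))/2}/(1-√τ) is convex on (0,1). -/
/-! Since `√τ ∈ (0, 1)`, the geometric series in `√τ` gives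
`τ ^ p / (1 - √τ) = ∑ n, τ ^ (p + n / 2)`. For `p ≥ 1` every summand is a convex power of `τ`,
and a pointwise convergent series of convex functions is convex. -/

open Real

theorem ConvexOn.of_hasSum {𝕜 E β ι : Type*} [Semiring 𝕜] [PartialOrder 𝕜] [AddCommMonoid E]
    [AddCommMonoid β] [PartialOrder β] [IsOrderedAddMonoid β] [TopologicalSpace β]
    [OrderClosedTopology β] [ContinuousAdd β] [SMul 𝕜 E] [DistribSMul 𝕜 β]
    [ContinuousConstSMul 𝕜 β] {s : Set E} (hs : Convex 𝕜 s) {F : ι → E → β} {f : E → β}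
    (hF : ∀ i, ConvexOn 𝕜 s (F i)) (hf : ∀ x ∈ s, HasSum (F · x) (f x)) :
    ConvexOn 𝕜 s f :=
  ⟨hs, fun _x hx _y hy _a _b ha hb hab =>
    hasSum_le (fun i => (hF i).2 hx hy ha hb hab) (hf _ (hs hx hy ha hb hab))
      (((hf _ hx).const_smul _).add ((hf _ hy).const_smul _))⟩

theorem hasSum_rpow_add_half {τ : ℝ} (h₀ : 0 < τ) (h₁ : τ < 1) (p : ℝ) :
    HasSum (fun n : ℕ => τ ^ (p + n / 2)) (τ ^ p / (1 - √τ)) := by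
  have hs₁ : √τ < 1 := (sqrt_lt' one_pos).2 (by rwa [one_pow])
  have hterm (n : ℕ) : τ ^ (p + n / 2) = τ ^ p * √τ ^ n := by
    rw [rpow_add h₀, sqrt_eq_rpow, ← rpow_mul_natCast h₀.le]
    ring_nf
  simp only [hterm, div_eq_mul_inv (τ ^ p)]
  exact (hasSum_geometric_of_lt_one (sqrt_nonneg τ) hs₁).mul_left (τ ^ p)

theorem convexOn_rpow_div_one_sub_sqrt {p : ℝ} (hp : 1 ≤ p) :
    ConvexOn ℝ (Set.Ioo 0 1) (fun τ : ℝ => τ ^ p / (1 - √τ)) := by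
  refine .of_hasSum (convex_Ioo 0 1) (fun n : ℕ => ?_) fun τ hτ => hasSum_rpow_add_half hτ.1 hτ.2 p
  have hpn : 1 ≤ p + n / 2 := le_add_of_le_of_nonneg hp (by positivity)
  exact (convexOn_rpow hpn).subset (fun τ hτ => hτ.1.le) (convex_Ioo 0 1)

/-- For every integer `k ≥ 1`, the function
`f(τ) = τ ^ (√(2(k+1))/2) / (1 - √τ)` is convex on `(0, 1)`. -/
theorem convexOn_ggk_approx (k : ℕ) (hk : 1 ≤ k) :
    ConvexOn ℝ (Set.Ioo (0:ℝ) 1)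
      (fun τ => τ ^ (Real.sqrt (2 * (k + 1)) / 2) / (1 - Real.sqrt τ)) := by
  have hk' : (1 : ℝ) ≤ k := by exact_mod_cast hk
  have h₂ : 2 ≤ √(2 * (k + 1)) := (le_sqrt' two_pos).2 (by linarith)
  exact convexOn_rpow_div_one_sub_sqrt (by linarith)
end

section
/- For real k, m ≥ 1, the sequence s_{k,m,n} := [Γ((k+m)n)/(Γ(mn)Γ(kn))] · [m^m k^k/(m+k)^{m+k}]^n is strictly increasing in the integer n ≥ 1. -/
/-!
With `B` the Beta function and `c = m^m k^k / (m+k)^(m+k)`, the sequence is `c^n / B(mn, kn)`.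
Since `B(m(n+1), k(n+1))` is the integral of `x^(mn-1) (1-x)^(kn-1)` against the extra factor
`x^m (1-x)^k`, and by weighted AM-GM that factor is at most `c`, with equality only at
`x = m/(m+k)`, we get `B(m(n+1), k(n+1)) < c B(mn, kn)`, which is the claimed monotonicity.
-/

open Real MeasureTheory ProbabilityTheory Set

section BetaIntegral

variable {α β : ℝ}

theorem ofReal_rpow_mul_one_sub_rpow {x : ℝ} (hx : x ∈ Icc 0 1) :
    ((x ^ (α - 1) * (1 - x) ^ (β - 1) : ℝ) : ℂ) =
      (x : ℂ) ^ ((α : ℂ) - 1) * (1 - (x : ℂ)) ^ ((β : ℂ) - 1) := by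
  push_cast
  rw [Complex.ofReal_cpow hx.1, Complex.ofReal_cpow (sub_nonneg.mpr hx.2)]
  push_cast
  rfl

theorem intervalIntegrable_rpow_mul_one_sub_rpow (hα : 0 < α) (hβ : 0 < β) :
    IntervalIntegrable (fun x : ℝ => x ^ (α - 1) * (1 - x) ^ (β - 1)) volume 0 1 := by
  refine (Complex.betaIntegral_convergent (u := α) (v := β) (by simpa) (by simpa)).norm.congr_uIoo
    fun x hx => ?_
  rw [uIoo_of_le zero_le_one] at hx
  simp only
  rw [← ofReal_rpow_mul_one_sub_rpow (Ioo_subset_Icc_self hx), Complex.norm_real,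
    Real.norm_eq_abs, abs_of_nonneg
      (mul_nonneg (rpow_nonneg hx.1.le _) (rpow_nonneg (sub_pos.2 hx.2).le _))]

theorem beta_eq_integral (hα : 0 < α) (hβ : 0 < β) :
    beta α β = ∫ x in (0 : ℝ)..1, x ^ (α - 1) * (1 - x) ^ (β - 1) := by
  have hcongr :
      EqOn (fun x : ℝ => (x : ℂ) ^ ((α : ℂ) - 1) * (1 - (x : ℂ)) ^ ((β : ℂ) - 1))
        (fun x : ℝ => ((x ^ (α - 1) * (1 - x) ^ (β - 1) : ℝ) : ℂ)) (uIcc 0 1) := by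
    intro x hx
    rw [uIcc_of_le zero_le_one] at hx
    exact (ofReal_rpow_mul_one_sub_rpow hx).symm
  rw [beta_eq_betaIntegralReal α β hα hβ, Complex.betaIntegral,
    intervalIntegral.integral_congr hcongr, intervalIntegral.integral_ofReal, Complex.ofReal_re]

end BetaIntegral

section MaxOfPowerProduct

variable {m k x : ℝ}

/- Weighted AM-GM with weights `m / (m + k)`, `k / (m + k)`, applied to `(m + k) x / m` and
`(m + k) (1 - x) / k`: their weighted mean is `1`, and the `(m + k)`-th power of their weighted
geometric mean is `x ^ m (1 - x) ^ k` divided by the bound. -/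
private lemma rpow_mul_one_sub_rpow_eq_geomMean (hm : 0 < m) (hk : 0 < k) (hx : x ∈ Icc 0 1) :
    x ^ m * (1 - x) ^ k =
      (((m + k) * x / m) ^ (m / (m + k)) * ((m + k) * (1 - x) / k) ^ (k / (m + k))) ^ (m + k) *
        (m ^ m * k ^ k / (m + k) ^ (m + k)) := by
  have hs : 0 < m + k := by positivity
  obtain ⟨hx0, hx1⟩ := hx
  have h1x : 0 ≤ 1 - x := sub_nonneg.2 hx1
  rw [mul_rpow (by positivity) (by positivity), ← rpow_mul (by positivity),
    ← rpow_mul (by positivity), div_mul_cancel₀ _ hs.ne', div_mul_cancel₀ _ hs.ne',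
    div_rpow (by positivity) hm.le, div_rpow (by positivity) hk.le,
    mul_rpow hs.le hx0, mul_rpow hs.le h1x, rpow_add hs]
  have := rpow_pos_of_pos hm m
  have := rpow_pos_of_pos hk k
  have := rpow_pos_of_pos hs m
  have := rpow_pos_of_pos hs k
  field_simp

private lemma weightedMean_eq_one (hm : 0 < m) (hk : 0 < k) :
    m / (m + k) * ((m + k) * x / m) + k / (m + k) * ((m + k) * (1 - x) / k) = 1 := by
  field_simp
  ring

theorem rpow_mul_one_sub_rpow_le (hm : 0 < m) (hk : 0 < k) (hx : x ∈ Icc 0 1) :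
    x ^ m * (1 - x) ^ k ≤ m ^ m * k ^ k / (m + k) ^ (m + k) := by
  have hs : 0 < m + k := by positivity
  obtain ⟨hx0, hx1⟩ := hx
  have h1x : 0 ≤ 1 - x := sub_nonneg.2 hx1
  have hG := geom_mean_le_arith_mean2_weighted (p₁ := (m + k) * x / m)
    (p₂ := (m + k) * (1 - x) / k) (div_pos hm hs).le (div_pos hk hs).le
    (by positivity) (by positivity) (by field_simp)
  rw [weightedMean_eq_one hm hk] at hG
  rw [rpow_mul_one_sub_rpow_eq_geomMean hm hk ⟨hx0, hx1⟩]
  exact mul_le_of_le_one_left (by positivity) (rpow_le_one (by positivity) hG hs.le)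

theorem rpow_mul_one_sub_rpow_lt (hm : 0 < m) (hk : 0 < k) (hx : x ∈ Icc 0 1)
    (hx_ne : x ≠ m / (m + k)) :
    x ^ m * (1 - x) ^ k < m ^ m * k ^ k / (m + k) ^ (m + k) := by
  have hs : 0 < m + k := by positivity
  obtain ⟨hx0, hx1⟩ := hx
  have h1x : 0 ≤ 1 - x := sub_nonneg.2 hx1
  have hne : (m + k) * x / m ≠ (m + k) * (1 - x) / k := by
    refine fun h => hx_ne ?_
    rw [div_eq_div_iff hm.ne' hk.ne'] at h
    rw [eq_div_iff hs.ne']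
    nlinarith
  have hG := (geom_mean_lt_arith_mean2_weighted_iff_of_pos (div_pos hm hs) (div_pos hk hs)
    (by positivity) (by positivity) (by field_simp)).2 hne
  rw [weightedMean_eq_one hm hk] at hG
  rw [rpow_mul_one_sub_rpow_eq_geomMean hm hk ⟨hx0, hx1⟩]
  exact mul_lt_of_lt_one_left (by positivity) (rpow_lt_one (by positivity) hG hs)

end MaxOfPowerProduct

theorem beta_add_lt {α β m k : ℝ} (hα : 0 < α) (hβ : 0 < β) (hm : 0 < m) (hk : 0 < k) :
    beta (α + m) (β + k) < m ^ m * k ^ k / (m + k) ^ (m + k) * beta α β := by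
  set c := m ^ m * k ^ k / (m + k) ^ (m + k)
  set f : ℝ → ℝ := fun x => x ^ (α - 1) * (1 - x) ^ (β - 1)
  set g : ℝ → ℝ := fun x => x ^ m * (1 - x) ^ k
  have hf_pos : ∀ x ∈ Ioo (0 : ℝ) 1, 0 < f x := fun x hx =>
    mul_pos (rpow_pos_of_pos hx.1 _) (rpow_pos_of_pos (sub_pos.2 hx.2) _)
  have hg_cont : ContinuousOn g (uIcc 0 1) :=
    ((continuous_rpow_const hm.le).mul
      ((continuous_rpow_const hk.le).comp (continuous_sub_left 1))).continuousOn
  have hsplit : beta (α + m) (β + k) = ∫ x in (0 : ℝ)..1, f x * g x := by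
    rw [beta_eq_integral (by positivity) (by positivity)]
    refine intervalIntegral.integral_congr_Ioo_of_le zero_le_one fun x hx => ?_
    rw [show α + m - 1 = α - 1 + m by ring, show β + k - 1 = β - 1 + k by ring,
      rpow_add hx.1, rpow_add (sub_pos.2 hx.2)]
    ring
  have hf := intervalIntegrable_rpow_mul_one_sub_rpow hα hβ
  rw [hsplit, beta_eq_integral hα hβ, ← intervalIntegral.integral_const_mul]
  refine intervalIntegral.integral_lt_integral_of_ae_le_of_measure_setOfPred_lt_ne_zero
    zero_le_one (hf.mul_continuousOn hg_cont) (hf.const_mul c) ?_ ?_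
  · filter_upwards [ae_restrict_mem measurableSet_Ioc] with x hx
    have hf_nonneg : 0 ≤ f x :=
      mul_nonneg (rpow_nonneg hx.1.le _) (rpow_nonneg (sub_nonneg.2 hx.2) _)
    rw [mul_comm c]
    exact mul_le_mul_of_nonneg_left
      (rpow_mul_one_sub_rpow_le hm hk (Ioc_subset_Icc_self hx)) hf_nonneg
  · have hp : 0 < m / (m + k) := by positivity
    have hp1 : m / (m + k) < 1 := (div_lt_one (by positivity)).2 (by linarith)
    have hlt_on : Ioo 0 (m / (m + k)) ⊆ {x | f x * g x < c * f x} ∩ Ioc 0 1 := fun x hx =>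
      ⟨by
        rw [mem_ofPred_eq, mul_comm c]
        exact mul_lt_mul_of_pos_left (rpow_mul_one_sub_rpow_lt hm hk
          ⟨hx.1.le, (hx.2.trans hp1).le⟩ hx.2.ne) (hf_pos x ⟨hx.1, hx.2.trans hp1⟩),
       hx.1, (hx.2.trans hp1).le⟩
    rw [Measure.restrict_apply' measurableSet_Ioc]
    exact ((Measure.measure_Ioo_pos _).2 hp |>.trans_le (measure_mono hlt_on)).ne'

theorem gamma_div_gamma_mul_gamma_eq_inv_beta (k m N : ℝ) :
    Gamma ((k + m) * N) / (Gamma (m * N) * Gamma (k * N)) = (beta (m * N) (k * N))⁻¹ := by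
  rw [beta, inv_div, add_mul, add_comm]

/-- For real `k, m ≥ 1`, the sequence
`s_{k,m,n} = Γ((k+m)n) / (Γ(mn)Γ(kn)) · [m^m k^k / (m+k)^(m+k)]^n`
is strictly increasing in the integer `n ≥ 1`. -/
theorem strictMono_gamma_series (k m : ℝ) (hk : 1 ≤ k) (hm : 1 ≤ m) :
    StrictMono (fun n : ℕ =>
      Real.Gamma ((k + m) * (n + 1)) /
        (Real.Gamma (m * (n + 1)) * Real.Gamma (k * (n + 1))) *
        (m ^ m * k ^ k / (m + k) ^ (m + k)) ^ (n + 1)) := by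
  have hk0 : 0 < k := by linarith
  have hm0 : 0 < m := by linarith
  set c := m ^ m * k ^ k / (m + k) ^ (m + k)
  have hc : 0 < c := by positivity
  refine strictMono_nat_of_lt_succ fun n => ?_
  set N : ℝ := n + 1
  have hN : 0 < N := by positivity
  have hB := beta_pos (mul_pos hm0 hN) (mul_pos hk0 hN)
  have hB' := beta_pos (add_pos (mul_pos hm0 hN) hm0) (add_pos (mul_pos hk0 hN) hk0)
  have hrec := beta_add_lt (mul_pos hm0 hN) (mul_pos hk0 hN) hm0 hk0
  simp only [gamma_div_gamma_mul_gamma_eq_inv_beta, Nat.cast_succ]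
  rw [show m * (N + 1) = m * N + m by ring, show k * (N + 1) = k * N + k by ring]
  calc (beta (m * N) (k * N))⁻¹ * c ^ (n + 1)
      = (c * beta (m * N) (k * N))⁻¹ * c ^ (n + 1 + 1) := by field_simp; ring
    _ < (beta (m * N + m) (k * N + k))⁻¹ * c ^ (n + 1 + 1) := by gcongr
end

section
/- For all real k, m ≥ 1 and all x > 0, the function h(x) := ln Γ((k+m)x) − ln Γ(kx) − ln Γ(mx) − x[k ln((k+m)/k) + m ln((k+m)/m)] has nonnegative derivative; that is, (k+m)ψ((k+m)x) − kψ(kx) − mψ(mx) ≥ k ln((k+m)/k) + m ln((k+m)/m), where ψ is the digamma function. -/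
/-!
With `ψ = (log ∘ Γ)'`, the point is that `ψ - log` is monotone on `(0, ∞)`. For `0 < u ≤ v`,
`ψ v - ψ u ≥ 0` because `log ∘ Γ` is convex; shifting by one with `ψ (t + 1) = ψ t + 1 / t` and
using that `t ↦ log t - log (t + 1) + 1 / t` is antitone, induction gives
`ψ v - ψ u ≥ log v - log u - (log (v + n) - log (u + n))` for every `n : ℕ`, and the last term
tends to `0`. The derivative of the combination is
`k ((ψ - log) ((k + m) x) - (ψ - log) (k x)) + m ((ψ - log) ((k + m) x) - (ψ - log) (m x))`.
-/

open Set Filter Topology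

namespace Real

noncomputable def digamma (x : ℝ) : ℝ := deriv (log ∘ Gamma) x

variable {x u v : ℝ}

theorem hasDerivAt_log_Gamma (hx : 0 < x) : HasDerivAt (log ∘ Gamma) (digamma x) x := by
  have hΓ : DifferentiableAt ℝ Gamma x :=
    differentiableAt_Gamma fun n h => by linarith [h ▸ hx, (n.cast_nonneg : (0 : ℝ) ≤ n)]
  exact (hΓ.log (Gamma_pos_of_pos hx).ne').hasDerivAt

theorem hasDerivAt_log_Gamma_const_mul {c : ℝ} (hc : 0 < c) (hx : 0 < x) :
    HasDerivAt (fun y => log (Gamma (c * y))) (c * digamma (c * x)) x := by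
  have h := (hasDerivAt_log_Gamma (mul_pos hc hx)).comp x ((hasDerivAt_id x).const_mul c)
  rwa [mul_one, mul_comm] at h

theorem digamma_add_one (hx : 0 < x) : digamma (x + 1) = digamma x + x⁻¹ := by
  have hfeq : (fun t => (log ∘ Gamma) (t + 1)) =ᶠ[𝓝 x] fun t => log t + (log ∘ Gamma) t := by
    filter_upwards [eventually_gt_nhds hx] with t ht
    simp only [Function.comp_apply]
    rw [Gamma_add_one ht.ne', log_mul ht.ne' (Gamma_pos_of_pos ht).ne']
  calc digamma (x + 1)
      = deriv (fun t => (log ∘ Gamma) (t + 1)) x := (deriv_comp_add_const ..).symm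
    _ = x⁻¹ + digamma x :=
      hfeq.deriv_eq.trans ((hasDerivAt_log hx.ne').add (hasDerivAt_log_Gamma hx)).deriv
    _ = digamma x + x⁻¹ := add_comm _ _

theorem digamma_monotoneOn : MonotoneOn digamma (Ioi 0) :=
  convexOn_log_Gamma.monotoneOn_deriv fun _ hx => (hasDerivAt_log_Gamma hx).differentiableAt

theorem antitoneOn_log_sub_log_add_one_add_inv :
    AntitoneOn (fun t => log t - log (t + 1) + t⁻¹) (Ioi 0) := by
  have hderiv : ∀ t ∈ Ioi (0 : ℝ), HasDerivAt (fun t => log t - log (t + 1) + t⁻¹)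
      (t⁻¹ - (t + 1)⁻¹ - (t ^ 2)⁻¹) t := fun t (ht : 0 < t) =>
    ((hasDerivAt_log ht.ne').sub
      ((hasDerivAt_log (by linarith : t + 1 ≠ 0)).comp_add_const t 1)).add
      (hasDerivAt_inv ht.ne')
  refine antitoneOn_of_hasDerivWithinAt_nonpos (f' := fun t => t⁻¹ - (t + 1)⁻¹ - (t ^ 2)⁻¹)
    (convex_Ioi 0)
    (fun t ht => (hderiv t ht).continuousAt.continuousWithinAt) (fun t ht => ?_) fun t ht => ?_
  · rw [interior_Ioi] at ht
    exact (hderiv t ht).hasDerivWithinAt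
  · rw [interior_Ioi, mem_Ioi] at ht
    have : t⁻¹ - (t + 1)⁻¹ - (t ^ 2)⁻¹ = -(t ^ 2 * (t + 1))⁻¹ := by field_simp; ring
    rw [this, neg_nonpos]
    positivity

theorem log_sub_log_le_digamma_sub_digamma_add_nat (n : ℕ) (hu : 0 < u) (huv : u ≤ v) :
    log v - log u ≤ digamma v - digamma u + (log (v + n) - log (u + n)) := by
  induction n generalizing u v with
  | zero => simpa using digamma_monotoneOn hu (hu.trans_le huv) huv
  | succ n ih =>
    have hshift := ih (u := u + 1) (v := v + 1) (by linarith) (by linarith)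
    have hstep : log v - log (v + 1) + v⁻¹ ≤ log u - log (u + 1) + u⁻¹ :=
      antitoneOn_log_sub_log_add_one_add_inv hu (hu.trans_le huv) huv
    rw [digamma_add_one hu, digamma_add_one (hu.trans_le huv)] at hshift
    push_cast
    rw [← add_assoc, ← add_assoc, add_right_comm v, add_right_comm u]
    linarith

theorem digamma_sub_log_monotoneOn : MonotoneOn (fun x => digamma x - log x) (Ioi 0) := by
  intro u (hu : 0 < u) v _ huv
  have hlim : Tendsto (fun n : ℕ => digamma v - digamma u + (log (v + n) - log (u + n)))
      atTop (𝓝 (digamma v - digamma u)) := by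
    have hgap : Tendsto (fun n : ℕ => log (v + n) - log (u + n)) atTop (𝓝 0) :=
      ((tendsto_log_comp_add_sub_log (v - u)).comp
        (tendsto_atTop_add_const_left _ u tendsto_natCast_atTop_atTop)).congr fun n => by
          rw [Function.comp_apply, add_right_comm, add_sub_cancel]
    simpa using tendsto_const_nhds.add hgap
  have := ge_of_tendsto hlim (Eventually.of_forall
    fun n => log_sub_log_le_digamma_sub_digamma_add_nat n hu huv)
  linarith

end Real

open Real

/-- For real `k, m ≥ 1` and `x > 0`, the function
`h(x) = ln Γ((k+m)x) − ln Γ(kx) − ln Γ(mx) − x[k ln((k+m)/k) + m ln((k+m)/m)]`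
has nonnegative derivative. -/
theorem deriv_log_gamma_combination_nonneg (k m : ℝ) (hk : 1 ≤ k) (hm : 1 ≤ m)
    (x : ℝ) (hx : 0 < x) :
    0 ≤ deriv (fun y : ℝ =>
      Real.log (Real.Gamma ((k + m) * y)) - Real.log (Real.Gamma (k * y)) -
        Real.log (Real.Gamma (m * y)) -
        y * (k * Real.log ((k + m) / k) + m * Real.log ((k + m) / m))) x := by
  have hk0 : 0 < k := by linarith
  have hm0 : 0 < m := by linarith
  have hkm : 0 < k + m := by linarith
  set C := k * log ((k + m) / k) + m * log ((k + m) / m)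
  have hderiv : HasDerivAt (fun y => log (Gamma ((k + m) * y)) - log (Gamma (k * y)) -
      log (Gamma (m * y)) - y * C) _ x := (((hasDerivAt_log_Gamma_const_mul hkm hx).sub
    (hasDerivAt_log_Gamma_const_mul hk0 hx)).sub (hasDerivAt_log_Gamma_const_mul hm0 hx)).sub
    ((hasDerivAt_id x).mul_const C)
  rw [hderiv.deriv]
  have log_ratio {c : ℝ} (hc : 0 < c) : log ((k + m) / c) = log ((k + m) * x) - log (c * x) := by
    rw [← log_div (by positivity) (by positivity), mul_div_mul_right _ _ hx.ne']
  have hk' := digamma_sub_log_monotoneOn (mul_pos hk0 hx) (mul_pos hkm hx)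
    (mul_le_mul_of_nonneg_right (by linarith) hx.le)
  have hm' := digamma_sub_log_monotoneOn (mul_pos hm0 hx) (mul_pos hkm hx)
    (mul_le_mul_of_nonneg_right (by linarith) hx.le)
  simp only [C, log_ratio hk0, log_ratio hm0, one_mul] at hk' hm' ⊢
  linarith [mul_le_mul_of_nonneg_left hk' hk0.le, mul_le_mul_of_nonneg_left hm' hm0.le]
end

section
/- For all real k, m ≥ 1 and all η ∈ (0,1): ((k+m)/(k+m+η))^{k+m} · (1 + 2η/m)^m · (1 − η/k)^k ≥ 1 − η. -/
/-- Convexity bound: `exp η ≤ 1 + 2η` for `η ∈ [0,1]`. -/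
lemma exp_le_one_add_two_mul {η : ℝ} (h0 : 0 ≤ η) (h1 : η ≤ 1) :
    Real.exp η ≤ 1 + 2 * η := by
  have hconv := convexOn_exp.2 (Set.mem_univ (0:ℝ)) (Set.mem_univ (1:ℝ))
    (by linarith : (0:ℝ) ≤ 1 - η) h0 (by ring)
  simp only [smul_eq_mul, mul_zero, mul_one, zero_add] at hconv
  have he : Real.exp 1 < 2.7182818286 := Real.exp_one_lt_d9
  have h2 : (1 - η) * Real.exp 0 + η * Real.exp 1 ≤ 1 + 2 * η := by
    rw [Real.exp_zero]
    nlinarith [Real.exp_pos (1:ℝ)]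
  linarith

/-- For all real `k, m ≥ 1` and `η ∈ (0,1)`:
`((k+m)/(k+m+η))^(k+m) · (1 + 2η/m)^m · (1 − η/k)^k ≥ 1 − η`. -/
theorem key_gamma_inequality (k m : ℝ) (hk : 1 ≤ k) (hm : 1 ≤ m)
    (η : ℝ) (hη : η ∈ Set.Ioo (0:ℝ) 1) :
    ((k + m) / (k + m + η)) ^ (k + m) * (1 + 2 * η / m) ^ m * (1 - η / k) ^ k
      ≥ 1 - η := by
  obtain ⟨hη0, hη1⟩ := hη
  have hk0 : (0:ℝ) < k := lt_of_lt_of_le one_pos hk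
  have hm0 : (0:ℝ) < m := lt_of_lt_of_le one_pos hm
  have hs0 : (0:ℝ) < k + m := by linarith
  have hsη : (0:ℝ) < k + m + η := by linarith
  -- factor C : (1 - η/k)^k ≥ 1 - η (Bernoulli)
  have hCbase : (0:ℝ) < 1 - η / k := by
    have : η / k ≤ η := by
      rw [div_le_iff₀ hk0]; nlinarith
    linarith
  have hC : 1 - η ≤ (1 - η / k) ^ k := by
    have := one_add_mul_self_le_rpow_one_add (s := -(η / k))
      (by nlinarith [hCbase] : (-1:ℝ) ≤ -(η/k)) hk
    have hkη : k * (η / k) = η := by field_simp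
    calc 1 - η = 1 + k * (-(η / k)) := by rw [mul_neg, hkη]; ring
      _ ≤ (1 + -(η / k)) ^ k := this
      _ = (1 - η / k) ^ k := by ring_nf
  -- factor B : (1 + 2η/m)^m ≥ 1 + 2η (Bernoulli)
  have hB : 1 + 2 * η ≤ (1 + 2 * η / m) ^ m := by
    have := one_add_mul_self_le_rpow_one_add (s := 2 * η / m)
      (by nlinarith [div_nonneg (by linarith : (0:ℝ) ≤ 2 * η) hm0.le]) hm
    have hmη : m * (2 * η / m) = 2 * η := by field_simp
    calc 1 + 2 * η = 1 + m * (2 * η / m) := by rw [hmη]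
      _ ≤ (1 + 2 * η / m) ^ m := this
  -- factor A : ((k+m)/(k+m+η))^(k+m) ≥ (exp η)⁻¹
  have hA : (Real.exp η)⁻¹ ≤ ((k + m) / (k + m + η)) ^ (k + m) := by
    have hbase : (k + m) / (k + m + η) = (1 + η / (k + m))⁻¹ := by
      field_simp
    have hub : (1 + η / (k + m)) ^ (k + m) ≤ Real.exp η := by
      have h1 : 1 + η / (k + m) ≤ Real.exp (η / (k + m)) := by
        linarith [Real.add_one_le_exp (η / (k + m))]
      have h2 : (1 + η / (k + m)) ^ (k + m) ≤ Real.exp (η / (k + m)) ^ (k + m) :=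
        Real.rpow_le_rpow (by positivity) h1 hs0.le
      rwa [← Real.exp_mul, div_mul_cancel₀ _ hs0.ne'] at h2
    rw [hbase, Real.inv_rpow (by positivity)]
    exact inv_anti₀ (by positivity) hub
  -- combine
  have hApos : (0:ℝ) < (Real.exp η)⁻¹ := by positivity
  have hprod1 : (Real.exp η)⁻¹ * (1 + 2 * η) * (1 - η)
      ≤ ((k + m) / (k + m + η)) ^ (k + m) * (1 + 2 * η / m) ^ m * (1 - η / k) ^ k := by
    have hBpos : (0:ℝ) ≤ 1 + 2 * η := by linarith
    have h1η : (0:ℝ) ≤ 1 - η := by linarith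
    apply mul_le_mul _ hC h1η (by positivity)
    exact mul_le_mul hA hB hBpos (by positivity)
  have hlast : 1 - η ≤ (Real.exp η)⁻¹ * (1 + 2 * η) * (1 - η) := by
    have hexp : Real.exp η ≤ 1 + 2 * η := exp_le_one_add_two_mul hη0.le hη1.le
    have : (1:ℝ) ≤ (Real.exp η)⁻¹ * (1 + 2 * η) := by
      rw [inv_mul_eq_div, le_div_iff₀ (Real.exp_pos η)]
      linarith
    nlinarith
  linarith
end

section
/- For all real k, m ≥ 1 and all η ∈ (0,1), the derivative F'(η) = 2m/(m+2η) − k/(k−η) − (k+m)/(k+m+η) + 1/(1−η) is strictly positive. -/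
/-- For all real `k, m ≥ 1` and `η ∈ (0,1)`,
`F'(η) = 2m/(m+2η) − k/(k−η) − (k+m)/(k+m+η) + 1/(1−η)` is strictly positive. -/
theorem F_deriv_pos (k m : ℝ) (hk : 1 ≤ k) (hm : 1 ≤ m)
    (η : ℝ) (hη : η ∈ Set.Ioo (0:ℝ) 1) :
    0 < 2 * m / (m + 2 * η) - k / (k - η) - (k + m) / (k + m + η) + 1 / (1 - η) := by
  obtain ⟨h0, h1⟩ := hη
  have hke : 0 < k - η := by linarith
  have h2 : 0 < m + 2 * η := by linarith
  have h3 : 0 < k + m + η := by linarith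
  have h4 : 0 < 1 - η := by linarith
  have hq : 0 < m - 2 * η + 4 * η ^ 2 := by nlinarith [sq_nonneg (1 - 2 * η)]
  have ha : 0 ≤ (k - 1) * (k + m + 1) * (m - 2 * η + 4 * η ^ 2) :=
    mul_nonneg (mul_nonneg (by linarith) (by linarith)) hq.le
  have hb : 0 < (1 - η) ^ 2 * (m ^ 2 + m - 2 * η) :=
    mul_pos (by positivity) (by nlinarith)
  have key : 2 * m / (m + 2 * η) - k / (k - η) - (k + m) / (k + m + η) + 1 / (1 - η)
      = ((k - 1) * (k + m + 1) * (m - 2 * η + 4 * η ^ 2)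
        + (1 - η) ^ 2 * (m ^ 2 + m - 2 * η))
        / ((m + 2 * η) * (k - η) * (k + m + η) * (1 - η)) := by
    field_simp
    ring
  rw [key]
  positivity
end

section
/- For real k, m ≥ 1, every a in (m/(m+k), 1) satisfies (k+m)a − m − (2−a)(1 − r(a)) ≥ 0, where r(a) = ((k+m)^{k+m}/(k^k m^m)) a^m (1−a)^k. -/
open Real

private lemma key_ineq (k m η : ℝ) (hk : 1 ≤ k) (hm : 1 ≤ m)
    (hη0 : 0 < η) (hη1 : η < 1) :
    (1 - η) * (k + m + η) ^ (k + m) * (m ^ m * k ^ k) ≤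
      (m + 2 * η) ^ m * (k - η) ^ k * (k + m) ^ (k + m) := by
  have hm0 : (0:ℝ) < m := lt_of_lt_of_le one_pos hm
  have hk0 : (0:ℝ) < k := lt_of_lt_of_le one_pos hk
  have hN0 : (0:ℝ) < k + m := by linarith
  have hkη : 0 < k - η := by linarith
  have hmη : 0 < m + 2 * η := by linarith
  have hNη : 0 < k + m + η := by linarith
  -- Bernoulli lower bound 1 : (1 + 2η/m)^m ≥ 1 + 2η
  have h1 : (1:ℝ) + 2 * η ≤ ((m + 2 * η) / m) ^ m := by
    have hb := one_add_mul_self_le_rpow_one_add (s := 2 * η / m)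
      (by have : (0:ℝ) ≤ 2 * η / m := by positivity
          linarith) hm
    have e1 : 1 + m * (2 * η / m) = 1 + 2 * η := by field_simp
    have e2 : 1 + 2 * η / m = (m + 2 * η) / m := by field_simp
    rw [e1, e2] at hb
    exact hb
  -- Bernoulli lower bound 2 : (1 - η/k)^k ≥ 1 - η
  have h2 : (1:ℝ) - η ≤ ((k - η) / k) ^ k := by
    have hb := one_add_mul_self_le_rpow_one_add (s := -(η / k))
      (by
        have : η / k ≤ 1 := by
          rw [div_le_one hk0]; linarith
        linarith) hk
    have e1 : 1 + k * -(η / k) = 1 - η := by field_simp; ring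
    have e2 : 1 + -(η / k) = (k - η) / k := by field_simp; ring
    rw [e1, e2] at hb
    exact hb
  -- upper bound : ((k+m+η)/(k+m))^(k+m) ≤ exp η ≤ 3^η ≤ 1 + 2η
  have h3 : ((k + m + η) / (k + m)) ^ (k + m) ≤ 1 + 2 * η := by
    have s1 : (k + m + η) / (k + m) ≤ Real.exp (η / (k + m)) := by
      have := Real.add_one_le_exp (η / (k + m))
      have e : (k + m + η) / (k + m) = η / (k + m) + 1 := by field_simp; ring
      rw [e]; exact this
    have s2 : ((k + m + η) / (k + m)) ^ (k + m) ≤ Real.exp (η / (k + m)) ^ (k + m) :=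
      Real.rpow_le_rpow (by positivity) s1 hN0.le
    have s3 : Real.exp (η / (k + m)) ^ (k + m) = Real.exp η := by
      rw [← Real.exp_mul, div_mul_cancel₀ _ hN0.ne']
    have s4 : Real.exp η ≤ (3:ℝ) ^ η := by
      rw [← Real.exp_one_rpow η]
      exact Real.rpow_le_rpow (Real.exp_pos 1).le
        (Real.exp_one_lt_d9.le.trans (by norm_num)) hη0.le
    have s5 : (3:ℝ) ^ η ≤ 1 + 2 * η := by
      have hb := rpow_one_add_le_one_add_mul_self (s := (2:ℝ)) (by norm_num)
        hη0.le hη1.le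
      norm_num at hb
      linarith [hb]
    calc ((k + m + η) / (k + m)) ^ (k + m) ≤ Real.exp η := by rw [← s3]; exact s2
      _ ≤ 1 + 2 * η := s4.trans s5
  -- combine
  have H : (1 - η) * ((k + m + η) / (k + m)) ^ (k + m) ≤
      ((m + 2 * η) / m) ^ m * ((k - η) / k) ^ k := by
    have l1 : (1 - η) * ((k + m + η) / (k + m)) ^ (k + m) ≤ (1 - η) * (1 + 2 * η) :=
      mul_le_mul_of_nonneg_left h3 (by linarith)
    have l2 : (1 - η) * (1 + 2 * η) ≤ ((m + 2 * η) / m) ^ m * ((k - η) / k) ^ k := by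
      have := mul_le_mul h1 h2 (by linarith) (by positivity)
      nlinarith [this]
    linarith
  rw [Real.div_rpow hNη.le hN0.le, Real.div_rpow hmη.le hm0.le,
    Real.div_rpow hkη.le hk0.le] at H
  rw [mul_div_assoc', div_mul_div_comm, div_le_div_iff₀ (by positivity) (by positivity)] at H
  nlinarith [H]

/-- For real `k, m ≥ 1` and every `a ∈ (m/(m+k), 1)`,
`(k+m)a − m − (2−a)(1 − r(a)) ≥ 0` where
`r(a) = ((k+m)^(k+m) / (k^k m^m)) a^m (1−a)^k`. -/
theorem D_deriv_key_inequality (k m : ℝ) (hk : 1 ≤ k) (hm : 1 ≤ m)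
    (a : ℝ) (ha : a ∈ Set.Ioo (m / (m + k)) 1) :
    (k + m) * a - m -
      (2 - a) * (1 - (k + m) ^ (k + m) / (k ^ k * m ^ m) * a ^ m * (1 - a) ^ k)
      ≥ 0 := by
  obtain ⟨ha1, ha2⟩ := ha
  have hm0 : (0:ℝ) < m := lt_of_lt_of_le one_pos hm
  have hk0 : (0:ℝ) < k := lt_of_lt_of_le one_pos hk
  have hmk : (0:ℝ) < m + k := by linarith
  have ha0 : 0 < a := lt_trans (by positivity) ha1
  have h1a : 0 < 1 - a := by linarith
  have ht : 0 < 2 - a := by linarith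
  have hs : 0 < (k + m) * a - m := by
    rw [div_lt_iff₀ hmk] at ha1
    nlinarith
  have hr0 : 0 ≤ (k + m) ^ (k + m) / (k ^ k * m ^ m) * a ^ m * (1 - a) ^ k := by
    positivity
  by_cases hcase : 2 - a ≤ (k + m) * a - m
  · nlinarith [mul_nonneg ht.le hr0]
  · push_neg at hcase
    set η : ℝ := ((k + m) * a - m) / (2 - a) with hηdef
    have hη0 : 0 < η := div_pos hs ht
    have hη1 : η < 1 := (div_lt_one ht).mpr hcase
    have hkη : 0 < k - η := by linarith
    have hmη : 0 < m + 2 * η := by linarith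
    have hNη : 0 < k + m + η := by linarith
    have hηeq : η * (2 - a) = (k + m) * a - m := div_mul_cancel₀ _ ht.ne'
    have haη : a = (m + 2 * η) / (k + m + η) := by
      rw [eq_div_iff hNη.ne']; nlinarith [hηeq]
    have h1aη : 1 - a = (k - η) / (k + m + η) := by
      rw [eq_div_iff hNη.ne']; nlinarith [hηeq]
    have key := key_ineq k m η hk hm hη0 hη1
    have hrval : (k + m) ^ (k + m) / (k ^ k * m ^ m) * a ^ m * (1 - a) ^ k =
        (k + m) ^ (k + m) * ((m + 2 * η) ^ m * (k - η) ^ k) /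
          (k ^ k * m ^ m * (k + m + η) ^ (k + m)) := by
      rw [h1aη, haη, Real.div_rpow hmη.le hNη.le, Real.div_rpow hkη.le hNη.le]
      rw [show (k + m + η) ^ (k + m) = (k + m + η) ^ k * (k + m + η) ^ m from by
        rw [← Real.rpow_add hNη]]
      field_simp
    have hrge : 1 - η ≤ (k + m) ^ (k + m) / (k ^ k * m ^ m) * a ^ m * (1 - a) ^ k := by
      rw [hrval, le_div_iff₀ (by positivity)]
      nlinarith [key]
    have := mul_le_mul_of_nonneg_left hrge ht.le
    nlinarith [hηeq, this]
end

section
/- Let (a_n)_{n≥1} be a nondecreasing sequence of nonnegative reals and let r ∈ (0,1). Then Σ_{n≥1} n a_n r^{n−1} ≥ (1/(1−r)) Σ_{n≥1} a_n r^{n−1} (with both sides possibly infinite). -/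
/-!
Since `1 / (1 - x) = ∑ₖ xᵏ`, the Cauchy product turns the left-hand side into
`∑ₙ ∑_{k + l = n} b l * xⁿ`; monotonicity bounds each of the `n + 1` inner terms by `b n * xⁿ`.
Working in `ℝ≥0∞` makes every rearrangement free, and `ENNReal.ofReal ∘ a` is again monotone.
-/

open Finset
open scoped ENNReal

theorem ENNReal.tsum_mul_tsum_eq_tsum_sum_antidiagonal {A : Type*} [AddCommMonoid A]
    [HasAntidiagonal A] (f g : A → ℝ≥0∞) :
    (∑' n, f n) * ∑' n, g n = ∑' n, ∑ kl ∈ antidiagonal n, f kl.1 * g kl.2 := by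
  simp_rw [← ENNReal.tsum_mul_right, ← ENNReal.tsum_mul_left, ← ENNReal.tsum_prod,
    ← HasAntidiagonal.sigmaAntidiagonalEquivProd.tsum_eq, ENNReal.tsum_sigma', tsum_fintype]
  exact tsum_congr fun n => sum_coe_sort (antidiagonal n) fun kl => f kl.1 * g kl.2

theorem ENNReal.inv_one_sub_mul_tsum_mul_pow_le_of_monotone {b : ℕ → ℝ≥0∞} (hb : Monotone b)
    (x : ℝ≥0∞) : (1 - x)⁻¹ * ∑' n, b n * x ^ n ≤ ∑' n, (n + 1) * b n * x ^ n := by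
  rw [← ENNReal.tsum_geometric, ENNReal.tsum_mul_tsum_eq_tsum_sum_antidiagonal]
  refine ENNReal.tsum_le_tsum fun n => ?_
  calc ∑ kl ∈ antidiagonal n, x ^ kl.1 * (b kl.2 * x ^ kl.2)
      ≤ ∑ _kl ∈ antidiagonal n, b n * x ^ n := by
        refine sum_le_sum fun kl hkl => ?_
        rw [HasAntidiagonal.mem_antidiagonal] at hkl
        calc x ^ kl.1 * (b kl.2 * x ^ kl.2) = b kl.2 * x ^ n := by rw [← hkl, pow_add]; ring
          _ ≤ b n * x ^ n := by gcongr; exact hb (hkl ▸ Nat.le_add_left _ _)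
    _ = (n + 1) * b n * x ^ n := by
        rw [sum_const, Nat.card_antidiagonal, nsmul_eq_mul]; push_cast; ring

theorem tsum_weighted_geometric_lower_bound_general (a : ℕ → ℝ)
    (hmono : Monotone a) (r : ℝ) (hr : r ∈ Set.Ioo (0:ℝ) 1) :
    ENNReal.ofReal (1 / (1 - r)) * ∑' n : ℕ, ENNReal.ofReal (a n * r ^ n)
      ≤ ∑' n : ℕ, ENNReal.ofReal ((n + 1) * a n * r ^ n) := by
  obtain ⟨hr0, hr1⟩ := hr
  have hgeom : ENNReal.ofReal (1 / (1 - r)) = (1 - ENNReal.ofReal r)⁻¹ := by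
    rw [one_div, ENNReal.ofReal_inv_of_pos (sub_pos.2 hr1), ENNReal.ofReal_sub _ hr0.le,
      ENNReal.ofReal_one]
  have hterm (n : ℕ) :
      ENNReal.ofReal (a n * r ^ n) = ENNReal.ofReal (a n) * ENNReal.ofReal r ^ n := by
    rw [ENNReal.ofReal_mul' (by positivity), ENNReal.ofReal_pow hr0.le]
  have hweighted (n : ℕ) : ENNReal.ofReal ((n + 1) * a n * r ^ n)
      = (n + 1) * ENNReal.ofReal (a n) * ENNReal.ofReal r ^ n := by
    rw [mul_assoc, ENNReal.ofReal_mul (by positivity), hterm, mul_assoc]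
    norm_cast
  simp_rw [hgeom, hterm, hweighted]
  exact ENNReal.inv_one_sub_mul_tsum_mul_pow_le_of_monotone (ENNReal.ofReal_mono.comp hmono) _

/-- If `(a_n)_{n ≥ 1}` is a nondecreasing sequence of nonnegative reals and
`r ∈ (0,1)`, then `Σ_{n≥1} n a_n r^(n−1) ≥ (1/(1−r)) Σ_{n≥1} a_n r^(n−1)`,
both sides possibly infinite (sums taken in `ℝ≥0∞`; here `a n` plays the role
of `a_{n+1}`). -/
theorem tsum_weighted_geometric_lower_bound (a : ℕ → ℝ) (ha0 : ∀ n, 0 ≤ a n)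
    (hmono : Monotone a) (r : ℝ) (hr : r ∈ Set.Ioo (0:ℝ) 1) :
    ENNReal.ofReal (1 / (1 - r)) * ∑' n : ℕ, ENNReal.ofReal (a n * r ^ n)
      ≤ ∑' n : ℕ, ENNReal.ofReal ((n + 1) * a n * r ^ n) :=
  tsum_weighted_geometric_lower_bound_general a hmono r hr
end

section
/- The function r̂(λ̂) := λ̂² ln(1−λ̂²) − λ̂² ln(λ̂²) + a·λ̂², arising from logit demand with parameter a, is in general not concave on (0,1): for a = 1 there exist points in (0,1) where its second derivative is strictly positive. -/
/-!
With `y = l²` the chain rule gives `r̂''(l) = 2 r'(y) + 4 y r''(y)`, which equals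
`2 log ((1 - y) / y) + 2a - 6 - 6y / (1 - y) - 4y / (1 - y)²`; the logarithm blows up as `y → 0`.
At `a = 1`, `l = 1/10` this is `2 log 99 - 4 - 6/99 - 400/9801 > 0`, because `e³ < 99`.
-/

open Real Filter Topology

noncomputable def logitRevenue (a y : ℝ) : ℝ :=
  y * log (1 - y) - y * log y + a * y

noncomputable def logitRevenueDeriv (a y : ℝ) : ℝ :=
  log (1 - y) - log y - y / (1 - y) + a - 1

theorem hasDerivAt_logitRevenue (a : ℝ) {y : ℝ} (h0 : y ≠ 0) (h1 : y ≠ 1) :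
    HasDerivAt (logitRevenue a) (logitRevenueDeriv a y) y := by
  have h1' : 1 - y ≠ 0 := sub_ne_zero.mpr h1.symm
  have hsub : HasDerivAt (fun y => 1 - y) (-1) y := by simpa using (hasDerivAt_id y).const_sub 1
  have H := ((hasDerivAt_id' y).mul (hsub.log h1')).sub ((hasDerivAt_id' y).mul (hasDerivAt_log h0))
    |>.add ((hasDerivAt_id' y).const_mul a)
  refine H.congr_deriv ?_
  simp only [logitRevenueDeriv]
  field_simp
  ring

theorem hasDerivAt_logitRevenueDeriv (a : ℝ) {y : ℝ} (h0 : y ≠ 0) (h1 : y ≠ 1) :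
    HasDerivAt (logitRevenueDeriv a) (-1 / (1 - y) - 1 / y - 1 / (1 - y) ^ 2) y := by
  have h1' : 1 - y ≠ 0 := sub_ne_zero.mpr h1.symm
  have hsub : HasDerivAt (fun y => 1 - y) (-1) y := by simpa using (hasDerivAt_id y).const_sub 1
  have H := ((hsub.log h1').sub (hasDerivAt_log h0)).sub ((hasDerivAt_id' y).div hsub h1')
    |>.add_const a |>.sub_const 1
  refine H.congr_deriv ?_
  field_simp
  ring

theorem hasDerivAt_deriv_comp_sq {g g' : ℝ → ℝ} {g'' x : ℝ}
    (hg : ∀ᶠ y in 𝓝 (x ^ 2), HasDerivAt g (g' y) y) (hg' : HasDerivAt g' g'' (x ^ 2)) :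
    HasDerivAt (deriv fun l => g (l ^ 2)) (2 * g' (x ^ 2) + 4 * x ^ 2 * g'') x := by
  have hsq : ∀ l : ℝ, HasDerivAt (fun l => l ^ 2) (2 * l) l := fun l => by
    simpa using hasDerivAt_pow 2 l
  have hderiv : (deriv fun l => g (l ^ 2)) =ᶠ[𝓝 x] fun l => g' (l ^ 2) * (2 * l) := by
    have hcont : Tendsto (fun l : ℝ => l ^ 2) (𝓝 x) (𝓝 (x ^ 2)) := (continuous_pow 2).tendsto x
    filter_upwards [hcont.eventually hg] with l hl
    exact (hl.comp (h := fun l => l ^ 2) l (hsq l)).deriv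
  have H := ((hg'.comp (h := fun l => l ^ 2) x (hsq x)).mul ((hasDerivAt_id x).const_mul 2))
  refine (H.congr_of_eventuallyEq hderiv).congr_deriv ?_
  simp only [Function.comp_def, id]
  ring

theorem hasDerivAt_deriv_logitRevenue_comp_sq (a : ℝ) {x : ℝ} (h0 : 0 < x) (h1 : x < 1) :
    HasDerivAt (deriv fun l => logitRevenue a (l ^ 2))
      (2 * logitRevenueDeriv a (x ^ 2) +
        4 * x ^ 2 * (-1 / (1 - x ^ 2) - 1 / x ^ 2 - 1 / (1 - x ^ 2) ^ 2)) x := by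
  have hx2 : x ^ 2 ∈ Set.Ioo (0 : ℝ) 1 := ⟨by positivity, by nlinarith⟩
  refine hasDerivAt_deriv_comp_sq ?_ (hasDerivAt_logitRevenueDeriv a hx2.1.ne' hx2.2.ne)
  filter_upwards [isOpen_Ioo.mem_nhds hx2] with y hy
  exact hasDerivAt_logitRevenue a hy.1.ne' hy.2.ne

/-- The function `r̂(λ̂) = λ̂² ln(1−λ̂²) − λ̂² ln(λ̂²) + a λ̂²` with `a = 1` is
not concave on `(0,1)`: there is a point in `(0,1)` where its second
derivative is strictly positive. -/
theorem logit_revenue_sqrt_not_concave :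
    ∃ x ∈ Set.Ioo (0:ℝ) 1,
      0 < deriv (deriv (fun l : ℝ =>
        l ^ 2 * Real.log (1 - l ^ 2) - l ^ 2 * Real.log (l ^ 2) + 1 * l ^ 2)) x := by
  refine ⟨1 / 10, by norm_num, ?_⟩
  change 0 < deriv (deriv fun l => logitRevenue 1 (l ^ 2)) (1 / 10)
  rw [(hasDerivAt_deriv_logitRevenue_comp_sq 1 (by norm_num) (by norm_num)).deriv]
  have hlog : log (1 - (1 / 10 : ℝ) ^ 2) - log ((1 / 10) ^ 2) = log 99 := by
    rw [← log_div (by norm_num) (by norm_num)]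
    norm_num
  have h99 : 3 < log 99 := by
    rw [lt_log_iff_exp_lt (by norm_num), show (3 : ℝ) = (3 : ℕ) * 1 by norm_num, exp_nat_mul]
    calc exp 1 ^ 3 < 2.72 ^ 3 := by gcongr; linarith [exp_one_lt_d9]
      _ < 99 := by norm_num
  simp only [logitRevenueDeriv, hlog]
  norm_num
  linarith
end
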